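/- Let G be a graph on n vertices with independence number α(G) ≤ 2 such that oh(G) < ⌈n/2⌉, and such that every proper induced subgraph G′ of G satisfies oh(G′) ≥ ⌈|G′|/2⌉. Then for every vertex v of G, the neighborhood N(v) is not a clique, α(G[N(v)]) = 2, and the induced subgraph G[N(v)] is connected. -/

import Mathlib

open SimpleGraph

/-- The spanning subgraph of `G` consisting of the edges that are bichromatic
(i.e. whose two endpoints receive different colors) under the 2-coloring `c`. -/
def SimpleGraph.bichromaticSubgraph {V : Type*} (G : SimpleGraph V) (c : V → Bool) :
    SimpleGraph V where
  Adj u v := G.Adj u v ∧ c u ≠ c v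
  symm := ⟨fun u v h => ⟨h.1.symm, h.2.symm⟩⟩
  loopless := ⟨fun v h => h.2 rfl⟩

/-- `G` contains an odd `K t` minor: there are `t` pairwise disjoint nonempty branch sets
and a 2-coloring of the vertices such that each branch set induces a connected subgraph
using only bichromatic edges (so it carries a spanning tree all of whose edges are
bichromatic), and every two branch sets are joined by a monochromatic edge of `G`. -/
def SimpleGraph.HasOddKMinor {V : Type*} (G : SimpleGraph V) (t : ℕ) : Prop :=
  ∃ (c : V → Bool) (B : Fin t → Set V),
    (∀ i, (B i).Nonempty) ∧
    (Pairwise fun i j => Disjoint (B i) (B j)) ∧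
    (∀ i, ((G.bichromaticSubgraph c).induce (B i)).Connected) ∧
    (∀ i j, i ≠ j → ∃ u ∈ B i, ∃ v ∈ B j, G.Adj u v ∧ c u = c v)

/-- `oh G` is the largest `t` such that `G` contains an odd `K t` minor. -/
noncomputable def SimpleGraph.oh {V : Type*} (G : SimpleGraph V) : ℕ :=
  sSup {t | G.HasOddKMinor t}

/-- The independence number of `G`. -/
noncomputable def SimpleGraph.indepNum' {V : Type*} (G : SimpleGraph V) : ℕ :=
  Gᶜ.cliqueNum

/-- The join of two vertex-disjoint graphs: take the disjoint union and add all
edges between the two parts. -/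
def SimpleGraph.joinG {α β : Type*} (G : SimpleGraph α) (H : SimpleGraph β) :
    SimpleGraph (α ⊕ β) where
  Adj u v := match u, v with
    | Sum.inl a, Sum.inl b => G.Adj a b
    | Sum.inr a, Sum.inr b => H.Adj a b
    | _, _ => True
  symm := by constructor; rintro (a | a) (b | b) h <;> first | exact h.symm | trivial
  loopless := by constructor; rintro (a | a) h <;> exact h.ne rfl

/-!
Since `α(G) ≤ 2`, a vertex set all of whose members miss a common outside vertex is a clique, and
a clique on `t` vertices is an odd `K_t` minor; so `G` has no clique on `⌈n/2⌉` vertices. The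
non-neighbours `M` of `v` form a clique, hence `N(v)` cannot be one: `N(v) ∪ {v}` and `M` would
be two cliques covering `V`. If `G[N(v)]` were disconnected, `N(v) = A ⊔ B` without `A`–`B`
edges; then `A`, `B` are cliques and every `m ∈ M` is complete to `A` or to `B`, which splits
`M = MA ⊔ MB`. Say `|MA| ≤ |MB|` and pick `b ∈ B`. The branch sets `{v, b}`, `{m, φ m}` for a
matching `φ : MA ↪ MB`, and `{a}` for `a ∈ A`, coloured `true` on `v`, `A`, `MA` and `false` on
`b`, `MB`, form an odd `K_{1+|A|+|MA|}` minor. Either this is large enough or the clique `B ∪ MB`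
has `⌈n/2⌉` vertices.
-/

namespace SimpleGraph

variable {V : Type*} {G : SimpleGraph V}

theorem HasOddKMinor.mono {s t : ℕ} (h : G.HasOddKMinor s) (hts : t ≤ s) :
    G.HasOddKMinor t := by
  obtain ⟨c, B, hne, hdisj, hconn, hjoin⟩ := h
  refine ⟨c, B ∘ Fin.castLE hts, fun i => hne _, fun i j hij => hdisj ?_, fun i => hconn _,
    fun i j hij => hjoin _ _ ?_⟩ <;> simpa [Fin.ext_iff] using hij

theorem HasOddKMinor.le_card [Finite V] {t : ℕ} (h : G.HasOddKMinor t) : t ≤ Nat.card V := by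
  obtain ⟨c, B, hne, hdisj, -, -⟩ := h
  choose f hf using hne
  have hf_inj : f.Injective := fun i j hij =>
    by_contra fun hne => Set.disjoint_left.1 (hdisj hne) (hf i) (hij ▸ hf j)
  simpa using Nat.card_le_card_of_injective f hf_inj

theorem HasOddKMinor.le_oh [Finite V] {t : ℕ} (h : G.HasOddKMinor t) : t ≤ G.oh :=
  le_csSup ⟨Nat.card V, fun _ h => h.le_card⟩ h

/-- Branch sets `{P i, Q i}`, each a `true` vertex `P i`, possibly with a bichromatic edge to a
`false` vertex `Q i`; the colouring is what makes them disjoint. -/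
theorem hasOddKMinor_of_pairs {ι : Type*} [Fintype ι] (c : V → Bool) (P Q : ι → V)
    (hP : P.Injective) (hcP : ∀ i, c (P i) = true)
    (hQ : ∀ i, Q i = P i ∨ c (Q i) = false ∧ G.Adj (P i) (Q i))
    (hQ_inj : Set.InjOn Q {i | c (Q i) = false})
    (hjoin : ∀ i j, i ≠ j → G.Adj (P i) (P j) ∨ G.Adj (Q i) (Q j) ∧ c (Q i) = c (Q j)) :
    G.HasOddKMinor (Fintype.card ι) := by
  have hmem : ∀ i u, u ∈ ({P i, Q i} : Set V) →
      (c u = true → u = P i) ∧ (c u = false → u = Q i ∧ c (Q i) = false) := by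
    rintro i u (rfl | rfl)
    · simp [hcP]
    · rcases hQ i with h | h
      · simp [h, hcP]
      · simp [h.1]
  obtain ⟨e⟩ : Nonempty (Fin (Fintype.card ι) ≃ ι) := ⟨(Fintype.equivFin ι).symm⟩
  refine ⟨c, fun k => {P (e k), Q (e k)}, fun k => ⟨P (e k), by simp⟩, ?_, fun k => ?_, ?_⟩
  · intro k l hkl
    refine Set.disjoint_left.2 fun u hk hl => hkl (e.injective ?_)
    cases hu : c u
    · obtain ⟨rfl, hck⟩ := (hmem _ u hk).2 hu
      obtain ⟨hQkl, hcl⟩ := (hmem _ _ hl).2 hu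
      exact hQ_inj hck hcl hQkl
    · exact hP (((hmem _ u hk).1 hu).symm.trans ((hmem _ u hl).1 hu))
  · rcases hQ (e k) with h | ⟨hc, hadj⟩
    · dsimp only
      rw [h, Set.pair_eq_singleton, induce_singleton_eq_top]
      exact connected_top
    · exact induce_pair_connected_of_adj ⟨hadj, by simp [hcP, hc]⟩
  · intro k l hkl
    rcases hjoin (e k) (e l) (e.injective.ne hkl) with h | ⟨h, hc⟩
    · exact ⟨_, Or.inl rfl, _, Or.inl rfl, h, by simp [hcP]⟩
    · exact ⟨_, Or.inr rfl, _, Or.inr rfl, h, hc⟩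

theorem IsClique.hasOddKMinor {s : Finset V} (hs : G.IsClique (s : Set V)) :
    G.HasOddKMinor s.card := by
  simpa using hasOddKMinor_of_pairs (ι := s) (fun _ => true) Subtype.val Subtype.val
    Subtype.val_injective (fun _ => rfl) (fun _ => Or.inl rfl) (by simp [Set.InjOn])
    (fun i j hij => Or.inl (hs i.2 j.2 (Subtype.val_injective.ne hij)))

theorem hasOddKMinor_of_matching [DecidableEq V] {v b : V} {A MA MB : Finset V}
    (hvb : G.Adj v b) (hbA : b ∉ A)
    (hvA : ∀ a ∈ A, G.Adj v a) (hvM : ∀ m ∈ MA ∪ MB, Gᶜ.Adj v m) (hMAB : Disjoint MA MB)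
    (hA : G.IsClique (A : Set V)) (hM : G.IsClique ((MA ∪ MB : Finset V) : Set V))
    (hMA : ∀ m ∈ MA, ∀ a ∈ A, G.Adj m a) (hMB : ∀ m ∈ MB, G.Adj m b)
    (hcard : MA.card ≤ MB.card) :
    G.HasOddKMinor (MA.card + A.card + 1) := by
  obtain ⟨φ⟩ : Nonempty (MA ↪ MB) :=
    Function.Embedding.nonempty_of_card_le (by simpa using hcard)
  have hvM' : ∀ m ∈ MA ∪ MB, v ≠ m ∧ ¬G.Adj v m :=
    fun m hm => (compl_adj G v m).1 (hvM m hm)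
  have hv : v ∉ MA ∧ v ∉ MB ∧ v ∉ A ∧ v ≠ b :=
    ⟨fun h => (hvM' v (by simp [h])).1 rfl, fun h => (hvM' v (by simp [h])).1 rfl,
      fun h => G.loopless.irrefl v (hvA v h), hvb.ne⟩
  have hN : ∀ u, G.Adj v u → u ∉ MA ∧ u ∉ MB :=
    fun u hu => ⟨fun h => (hvM' u (by simp [h])).2 hu, fun h => (hvM' u (by simp [h])).2 hu⟩
  have hMAMB : ∀ m ∈ MA, m ∉ MB := fun m hm => Finset.disjoint_left.1 hMAB hm
  have hA_adj : ∀ x ∈ A, ∀ y ∈ A, x ≠ y → G.Adj x y := fun x hx y hy => hA hx hy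
  have hM_adj : ∀ x ∈ MA ∪ MB, ∀ y ∈ MA ∪ MB, x ≠ y → G.Adj x y :=
    fun x hx y hy => hM hx hy
  let c : V → Bool := fun u => decide (u ≠ b ∧ u ∉ MB)
  let P : Option (MA ⊕ A) → V
    | none => v
    | some (.inl m) => m
    | some (.inr a) => a
  let Q : Option (MA ⊕ A) → V
    | none => b
    | some (.inl m) => φ m
    | some (.inr a) => a
  have hc : ∀ u, c u = false ↔ u = b ∨ u ∈ MB := by simp [c, or_iff_not_imp_left]
  have hcP : ∀ i, c (P i) = true := by
    rintro (_ | m | a) <;> simp only [c, P, decide_eq_true_eq] <;> grind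
  have hP : P.Injective := by
    rintro (_ | m | a) (_ | m' | a') h <;> simp only [P] at h <;> grind
  have hQ : ∀ i, Q i = P i ∨ c (Q i) = false ∧ G.Adj (P i) (Q i) := by
    rintro (_ | m | a) <;> simp only [P, Q, hc] <;> grind
  have hQ_inj : Set.InjOn Q {i | c (Q i) = false} := by
    rintro (_ | m | a) hi (_ | m' | a') hj h <;>
      simp only [Q, Set.mem_ofPred_eq, hc] at hi hj h <;> grind
  have hjoin : ∀ i j, i ≠ j →
      G.Adj (P i) (P j) ∨ G.Adj (Q i) (Q j) ∧ c (Q i) = c (Q j) := by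
    rintro (_ | m | a) (_ | m' | a') h <;> simp only [P, Q] <;> grind [adj_comm]
  simpa [add_comm] using hasOddKMinor_of_pairs c P Q hP hcP hQ hQ_inj hjoin

theorem IsClique.union {s t : Set V} (hs : G.IsClique s) (ht : G.IsClique t)
    (hst : ∀ a ∈ s, ∀ b ∈ t, a ≠ b → G.Adj a b) : G.IsClique (s ∪ t) :=
  Set.pairwise_union.2
    ⟨hs, ht, fun a ha b hb hab => ⟨hst a ha b hb hab, (hst a ha b hb hab).symm⟩⟩

theorem indepNum'_eq_indepNum : G.indepNum' = G.indepNum := cliqueNum_compl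

theorem indepNum_induce_le [Finite V] (s : Set V) : (G.induce s).indepNum ≤ G.indepNum := by
  have hcompl : (G.induce s)ᶜ = Gᶜ.induce s := by
    ext
    simp [Subtype.ext_iff]
  rw [← cliqueNum_compl, ← cliqueNum_compl, hcompl]
  exact cliqueNum_induce_le s

theorem two_le_indepNum_induce_of_not_isClique [Finite V] {s : Set V} (h : ¬G.IsClique s) :
    2 ≤ (G.induce s).indepNum := by
  classical
  obtain ⟨x, hx, y, hy, hxy, hnxy⟩ : ∃ x ∈ s, ∃ y ∈ s, x ≠ y ∧ ¬G.Adj x y := by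
    simpa [IsClique, Set.Pairwise] using h
  have hind : (G.induce s).IsIndepSet (({⟨x, hx⟩, ⟨y, hy⟩} : Finset s) : Set s) := by
    simp [isIndepSet_iff, Set.pairwise_insert, hnxy, adj_comm]
  have hne : (⟨x, hx⟩ : s) ≠ ⟨y, hy⟩ := fun h => hxy (congrArg Subtype.val h)
  simpa [Finset.card_pair hne] using hind.card_le_indepNum

theorem adj_of_not_adj_of_not_adj [Finite V] (hα : G.indepNum ≤ 2) {x y z : V} (hxy : x ≠ y)
    (hxz : x ≠ z) (hyz : y ≠ z) (hnxy : ¬G.Adj x y) (hnxz : ¬G.Adj x z) : G.Adj y z := by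
  classical
  by_contra hnyz
  have hind : G.IsIndepSet (({x, y, z} : Finset V) : Set V) := by
    simp only [Finset.coe_insert, Finset.coe_singleton, isIndepSet_iff, Set.pairwise_insert,
      Set.pairwise_singleton]
    grind [adj_comm]
  have h3 := hind.card_le_indepNum
  rw [Finset.card_insert_of_notMem (by grind), Finset.card_pair hyz] at h3
  omega

theorem isClique_of_forall_not_adj [Finite V] (hα : G.indepNum ≤ 2) {x : V} {s : Set V}
    (hx : x ∉ s) (h : ∀ y ∈ s, ¬G.Adj x y) : G.IsClique s :=
  fun y hy z hz hyz => adj_of_not_adj_of_not_adj hα (ne_of_mem_of_not_mem hy hx).symm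
    (ne_of_mem_of_not_mem hz hx).symm hyz (h y hy) (h z hz)

theorem isClique_compl_neighborSet [Finite V] (hα : G.indepNum ≤ 2) (v : V) :
    G.IsClique (Gᶜ.neighborSet v) :=
  isClique_of_forall_not_adj hα (Gᶜ.notMem_neighborSet_self (a := v))
    fun _ hw => ((compl_adj G _ _).1 hw).2

theorem exists_split_of_not_connected_induce [DecidableEq V] {s : Finset V} {x : V}
    (hx : x ∈ s) (h : ¬(G.induce (s : Set V)).Connected) :
    ∃ A B : Finset V, Disjoint A B ∧ A ∪ B = s ∧ A.Nonempty ∧ B.Nonempty ∧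
      ∀ a ∈ A, ∀ b ∈ B, ¬G.Adj a b := by
  classical
  let R (u : V) : Prop := ∃ hu : u ∈ s, (G.induce (s : Set V)).Reachable ⟨x, hx⟩ ⟨u, hu⟩
  let A := s.filter R
  refine ⟨A, s \ A, Finset.disjoint_sdiff,
    Finset.union_sdiff_of_subset (Finset.filter_subset _ _),
    ⟨x, Finset.mem_filter.2 ⟨hx, hx, Reachable.refl _⟩⟩, ?_, ?_⟩
  · by_contra hB
    refine h ((connected_iff_exists_forall_reachable _).2 ⟨⟨x, hx⟩, fun ⟨u, hu⟩ => ?_⟩)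
    by_contra hxu
    exact hB ⟨u, Finset.mem_sdiff.2 ⟨hu, fun huA => hxu (Finset.mem_filter.1 huA).2.2⟩⟩
  · intro a ha b hb hab
    obtain ⟨-, _, hxa⟩ := Finset.mem_filter.1 ha
    obtain ⟨hbs, hbA⟩ := Finset.mem_sdiff.1 hb
    exact hbA (Finset.mem_filter.2 ⟨hbs, hbs, hxa.trans (Adj.reachable (G := G.induce _) hab)⟩)

variable [Fintype V] [DecidableEq V] [DecidableRel G.Adj]

theorem card_neighborFinset_add_card_neighborFinset_compl (v : V) :
    (G.neighborFinset v).card + (Gᶜ.neighborFinset v).card + 1 = Fintype.card V := by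
  rw [card_neighborFinset_eq_degree, card_neighborFinset_eq_degree, degree_compl]
  have := G.degree_lt_card_verts v
  omega

theorem hasOddKMinor_of_isClique_neighborSet (hα : G.indepNum ≤ 2) {v : V}
    (h : G.IsClique (G.neighborSet v)) : G.HasOddKMinor ((Fintype.card V + 1) / 2) := by
  have hN : G.IsClique (insert v (G.neighborFinset v) : Finset V) := by
    rw [Finset.coe_insert, coe_neighborFinset, isClique_insert]
    exact ⟨h, fun w hw _ => hw⟩
  have hM : G.IsClique (Gᶜ.neighborFinset v : Set V) := by
    simpa using G.isClique_compl_neighborSet hα v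
  have hcard := G.card_neighborFinset_add_card_neighborFinset_compl v
  have hins := Finset.card_insert_of_notMem (s := G.neighborFinset v) (a := v) (by simp)
  rcases le_or_gt ((Fintype.card V + 1) / 2) (insert v (G.neighborFinset v)).card with h | h
  · exact hN.hasOddKMinor.mono h
  · exact hM.hasOddKMinor.mono (by omega)

structure NeighborhoodSplit (G : SimpleGraph V) [DecidableRel G.Adj] (v : V)
    (A B MA MB : Finset V) : Prop where
  disjoint : Disjoint A B
  union_eq : A ∪ B = G.neighborFinset v
  disjoint_compl : Disjoint MA MB
  union_eq_compl : MA ∪ MB = Gᶜ.neighborFinset v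
  nonempty_left : A.Nonempty
  nonempty_right : B.Nonempty
  isClique_left : G.IsClique (A : Set V)
  isClique_right : G.IsClique (B : Set V)
  isClique_compl : G.IsClique ((MA ∪ MB : Finset V) : Set V)
  adj_left : ∀ m ∈ MA, ∀ a ∈ A, G.Adj m a
  adj_right : ∀ m ∈ MB, ∀ b ∈ B, G.Adj m b

namespace NeighborhoodSplit

variable {v : V} {A B MA MB : Finset V}

theorem symm (S : G.NeighborhoodSplit v A B MA MB) : G.NeighborhoodSplit v B A MB MA where
  disjoint := S.disjoint.symm
  union_eq := Finset.union_comm A B ▸ S.union_eq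
  disjoint_compl := S.disjoint_compl.symm
  union_eq_compl := Finset.union_comm MA MB ▸ S.union_eq_compl
  nonempty_left := S.nonempty_right
  nonempty_right := S.nonempty_left
  isClique_left := S.isClique_right
  isClique_right := S.isClique_left
  isClique_compl := Finset.union_comm MA MB ▸ S.isClique_compl
  adj_left := S.adj_right
  adj_right := S.adj_left

theorem adj_of_mem_left (S : G.NeighborhoodSplit v A B MA MB) {a : V} (ha : a ∈ A) :
    G.Adj v a :=
  (G.mem_neighborFinset v a).1 (S.union_eq ▸ Finset.mem_union_left B ha)

theorem compl_adj_of_mem_compl (S : G.NeighborhoodSplit v A B MA MB) {m : V}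
    (hm : m ∈ MA ∪ MB) : Gᶜ.Adj v m :=
  (Gᶜ.mem_neighborFinset v m).1 (S.union_eq_compl ▸ hm)

theorem hasOddKMinor_of_card_le (S : G.NeighborhoodSplit v A B MA MB)
    (hle : MA.card ≤ MB.card) : G.HasOddKMinor ((Fintype.card V + 1) / 2) := by
  obtain ⟨b, hb⟩ := S.nonempty_right
  have hvb := S.symm.adj_of_mem_left hb
  have hBMB : G.IsClique ((B ∪ MB : Finset V) : Set V) := by
    rw [Finset.coe_union]
    exact S.isClique_right.union (S.isClique_compl.subset (by simp))
      fun b hb m hm _ => (S.adj_right m hm b hb).symm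
  have hdisj : Disjoint B MB := Finset.disjoint_left.2 fun u hu hu' =>
    ((compl_adj G v u).1 (S.compl_adj_of_mem_compl (Finset.mem_union_right MA hu'))).2
      (S.symm.adj_of_mem_left hu)
  have hcard := G.card_neighborFinset_add_card_neighborFinset_compl v
  rw [← S.union_eq, ← S.union_eq_compl, Finset.card_union_of_disjoint S.disjoint,
    Finset.card_union_of_disjoint S.disjoint_compl] at hcard
  rcases le_or_gt ((Fintype.card V + 1) / 2) (B ∪ MB).card with hbig | hsmall
  · exact hBMB.hasOddKMinor.mono hbig
  · rw [Finset.card_union_of_disjoint hdisj] at hsmall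
    refine (hasOddKMinor_of_matching hvb (Finset.disjoint_right.1 S.disjoint hb)
      (fun a => S.adj_of_mem_left) (fun m => S.compl_adj_of_mem_compl) S.disjoint_compl
      S.isClique_left S.isClique_compl S.adj_left (fun m hm => S.adj_right m hm b hb) hle).mono
      (by omega)

end NeighborhoodSplit

theorem exists_neighborhoodSplit (hα : G.indepNum ≤ 2) {v : V} {A B : Finset V}
    (hAB : Disjoint A B) (hN : A ∪ B = G.neighborFinset v) (hA : A.Nonempty) (hB : B.Nonempty)
    (hnadj : ∀ a ∈ A, ∀ b ∈ B, ¬G.Adj a b) :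
    ∃ MA MB, G.NeighborhoodSplit v A B MA MB := by
  have hvN : ∀ u ∈ A ∪ B, G.Adj v u := fun u hu => (G.mem_neighborFinset v u).1 (hN ▸ hu)
  obtain ⟨a₀, ha₀⟩ := hA
  obtain ⟨b₀, hb₀⟩ := hB
  let M := Gᶜ.neighborFinset v
  refine ⟨M.filter fun m => ∀ a ∈ A, G.Adj m a, M.filter fun m => ¬∀ a ∈ A, G.Adj m a,
    hAB, hN, Finset.disjoint_filter_filter_not _ _ _, Finset.filter_union_filter_not_eq _ _,
    ⟨a₀, ha₀⟩, ⟨b₀, hb₀⟩, ?_, ?_, ?_, fun m hm => (Finset.mem_filter.1 hm).2, ?_⟩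
  · exact isClique_of_forall_not_adj hα (Finset.disjoint_right.1 hAB hb₀)
      fun a ha hb₀a => hnadj a ha b₀ hb₀ hb₀a.symm
  · exact isClique_of_forall_not_adj hα (Finset.disjoint_left.1 hAB ha₀) (hnadj a₀ ha₀)
  · rw [Finset.filter_union_filter_not_eq]
    simpa [M] using G.isClique_compl_neighborSet hα v
  · intro m hm b hb
    obtain ⟨hmM, a, ha, hma⟩ : m ∈ M ∧ ∃ a ∈ A, ¬G.Adj m a := by simpa using hm
    have hvm : v ≠ m ∧ ¬G.Adj v m := (compl_adj G v m).1 ((Gᶜ.mem_neighborFinset v m).1 hmM)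
    have hva := hvN a (Finset.mem_union_left B ha)
    have hvb := hvN b (Finset.mem_union_right A hb)
    exact adj_of_not_adj_of_not_adj hα (fun h => hvm.2 (h ▸ hva))
      (fun h => Finset.disjoint_left.1 hAB ha (h ▸ hb)) (fun h => hvm.2 (h ▸ hvb))
      (fun h => hma h.symm) (hnadj a ha b hb)

end SimpleGraph

theorem statement17_general {V : Type*} [Fintype V] (G : SimpleGraph V)
    (hα : G.indepNum' ≤ 2) (hoh : G.oh < (Fintype.card V + 1) / 2) :
    ∀ v : V, ¬ G.IsClique (G.neighborSet v) ∧
      (G.induce (G.neighborSet v)).indepNum' = 2 ∧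
      (G.induce (G.neighborSet v)).Connected := by
  classical
  rw [indepNum'_eq_indepNum] at hα
  have hno : ¬G.HasOddKMinor ((Fintype.card V + 1) / 2) := fun h => hoh.not_ge h.le_oh
  intro v
  have hnc : ¬G.IsClique (G.neighborSet v) := fun h =>
    hno (hasOddKMinor_of_isClique_neighborSet hα h)
  refine ⟨hnc, ?_, ?_⟩
  · rw [indepNum'_eq_indepNum]
    exact le_antisymm ((indepNum_induce_le _).trans hα)
      (two_le_indepNum_induce_of_not_isClique hnc)
  · obtain ⟨x, hx⟩ : (G.neighborSet v).Nonempty :=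
      Set.nonempty_iff_ne_empty.2 fun h => hnc (h ▸ isClique_empty)
    by_contra hconn
    rw [← coe_neighborFinset] at hconn
    obtain ⟨A, B, hAB, hN, hA, hB, hnadj⟩ :=
      exists_split_of_not_connected_induce ((G.mem_neighborFinset v x).2 hx) hconn
    obtain ⟨MA, MB, S⟩ := exists_neighborhoodSplit hα hAB hN hA hB hnadj
    rcases le_total MA.card MB.card with hle | hle
    · exact hno (S.hasOddKMinor_of_card_le hle)
    · exact hno (S.symm.hasOddKMinor_of_card_le hle)

theorem statement17 {V : Type*} [Fintype V] (G : SimpleGraph V)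
    (hα : G.indepNum' ≤ 2) (hoh : G.oh < (Fintype.card V + 1) / 2)
    (hmin : ∀ s : Finset V, s ≠ Finset.univ →
      (s.card + 1) / 2 ≤ (G.induce (s : Set V)).oh) :
    ∀ v : V, ¬ G.IsClique (G.neighborSet v) ∧
      (G.induce (G.neighborSet v)).indepNum' = 2 ∧
      (G.induce (G.neighborSet v)).Connected :=
  statement17_general G hα hoh
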